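/- Let Δ be a real polynomial of degree exactly d ≥ 2 and suppose there exist d+1 points x₁ < ... < x_{d+1} at which Δ alternates sign with |Δ(xᵢ)| ≥ 1. Then the derivative Δ' has exactly d−1 real roots y₁ < ... < y_{d−1}, and at each such critical point |Δ(yⱼ)| ≥ 1, with the values Δ(yⱼ) alternating in sign. -/

import Mathlib

/-!
Between consecutive sign changes `xᵢ < xᵢ₊₁` the polynomial `Δ` has a root `rᵢ`, giving `d` roots
`r₁ < ⋯ < r_d`. On `[rⱼ, rⱼ₊₁]`, which contains `xⱼ₊₁`, the function `Δ(xⱼ₊₁) · Δ` attains its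
maximum at an interior point `yⱼ`; this is a critical point with `Δ(xⱼ₊₁) Δ(yⱼ) ≥ Δ(xⱼ₊₁)²`, so
`Δ(yⱼ)` has the sign of `Δ(xⱼ₊₁)` and `|Δ(yⱼ)| ≥ |Δ(xⱼ₊₁)| ≥ 1`. The `d - 1` distinct critical
points `yⱼ` exhaust the roots of `Δ'`, which has degree `d - 1`.
-/

open Set Polynomial

theorem exists_mem_Ioo_eq_zero_of_mul_neg {α : Type*} [ConditionallyCompleteLinearOrder α]
    [TopologicalSpace α] [OrderTopology α] [DenselyOrdered α] {f : α → ℝ} {a b : α}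
    (hab : a ≤ b) (hf : ContinuousOn f (Icc a b)) (h : f a * f b < 0) :
    ∃ c ∈ Ioo a b, f c = 0 := by
  rcases mul_neg_iff.mp h with ⟨ha, hb⟩ | ⟨ha, hb⟩
  · exact intermediate_value_Ioo' hab hf ⟨hb, ha⟩
  · exact intermediate_value_Ioo hab hf ⟨ha, hb⟩

theorem exists_deriv_eq_zero_mul_pos_abs_le {f : ℝ → ℝ} {a b c : ℝ}
    (hf : ContinuousOn f (Icc a b)) (ha : f a = 0) (hb : f b = 0) (hc : c ∈ Ioo a b)
    (hfc : f c ≠ 0) : ∃ y ∈ Ioo a b, deriv f y = 0 ∧ 0 < f c * f y ∧ |f c| ≤ |f y| := by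
  have hg : ContinuousOn (fun t ↦ f c * f t) (Icc a b) := continuousOn_const.mul hf
  obtain ⟨y, hyab, hmax⟩ := isCompact_Icc.exists_isMaxOn (nonempty_Icc.2 (hc.1.trans hc.2).le) hg
  have hle : f c * f c ≤ f c * f y := hmax (Ioo_subset_Icc_self hc)
  have hpos : 0 < f c * f y := (mul_self_pos.2 hfc).trans_le hle
  have hy : y ∈ Ioo a b :=
    ⟨hyab.1.lt_of_ne (by rintro rfl; simp [ha] at hpos),
      hyab.2.lt_of_ne (by rintro rfl; simp [hb] at hpos)⟩
  have hderiv : f c * deriv f y = 0 := by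
    simpa [deriv_const_mul_field'] using
      (hmax.isLocalMax (Icc_mem_nhds hy.1 hy.2)).deriv_eq_zero
  refine ⟨y, hy, (mul_eq_zero.1 hderiv).resolve_left hfc, hpos, ?_⟩
  refine le_of_mul_le_mul_left ?_ (abs_pos.2 hfc)
  rwa [← abs_mul, ← abs_mul, abs_mul_self, abs_of_pos hpos]

theorem Fin.strictMono_of_mem_Ioo_castSucc_succ {α : Type*} [Preorder α] {n : ℕ}
    {x : Fin (n + 1) → α} {r : Fin n → α} (hx : Monotone x)
    (hr : ∀ i, r i ∈ Ioo (x i.castSucc) (x i.succ)) : StrictMono r :=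
  fun i j hij ↦ ((hr i).2.trans_le (hx (Fin.succ_le_castSucc_iff.2 hij))).trans (hr j).1

/-- If `Δ` (degree `d ≥ 2`) alternates with magnitude `≥ 1` at `d+1` points, then
`Δ'` has exactly `d-1` real roots, and at each critical point `|Δ| ≥ 1` with
alternating signs of the critical values. -/
theorem derivative_roots_of_alternating
    (d : ℕ) (hd : 2 ≤ d) (Δ : Polynomial ℝ) (hdeg : Δ.natDegree = d)
    (x : Fin (d + 1) → ℝ) (hx : StrictMono x)
    (halt : ∀ i : Fin d, Δ.eval (x i.castSucc) * Δ.eval (x i.succ) < 0)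
    (hbig : ∀ i, 1 ≤ |Δ.eval (x i)|) :
    ∃ y : Fin (d - 1) → ℝ, StrictMono y ∧
      (∀ j, Δ.derivative.IsRoot (y j)) ∧
      (∀ z : ℝ, Δ.derivative.IsRoot z → ∃ j, z = y j) ∧
      Multiset.card Δ.derivative.roots = d - 1 ∧
      (∀ j, 1 ≤ |Δ.eval (y j)|) ∧
      (∀ j : Fin (d - 1), ∀ hj : (j : ℕ) + 1 < d - 1,
        Δ.eval (y j) * Δ.eval (y ⟨(j : ℕ) + 1, hj⟩) < 0) := by
  obtain ⟨n, rfl⟩ : ∃ n, d = n + 1 := ⟨d - 1, by omega⟩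
  rw [Nat.add_sub_cancel]
  choose r hr hr0 using fun i : Fin (n + 1) ↦ exists_mem_Ioo_eq_zero_of_mul_neg
    (hx.monotone (Fin.castSucc_le_succ i)) Δ.continuousOn (halt i)
  have hr_mono : StrictMono r := Fin.strictMono_of_mem_Ioo_castSucc_succ hx.monotone hr
  choose y hy hy0 hy_pos hy_abs using fun j : Fin n ↦
    exists_deriv_eq_zero_mul_pos_abs_le Δ.continuousOn (hr0 j.castSucc) (hr0 j.succ)
      ⟨(hr j.castSucc).2, (hr j.succ).1⟩ (abs_pos.1 (one_pos.trans_le (hbig _)))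
  have hy_mono : StrictMono y := Fin.strictMono_of_mem_Ioo_castSucc_succ hr_mono.monotone hy
  have hdeg' : Δ.derivative.degree = n := by
    rw [degree_derivative (by omega), hdeg, Nat.add_sub_cancel]
  have hroots : Δ.derivative.roots = (Finset.univ.map ⟨y, hy_mono.injective⟩).val :=
    roots_eq_of_degree_eq_card (by simpa using hy0) (by simpa using hdeg'.symm)
  refine ⟨y, hy_mono, fun j ↦ by simpa using hy0 j, fun z hz ↦ ?_, by simp [hroots],
    fun j ↦ (hbig _).trans (hy_abs j), fun j hj ↦ ?_⟩
  · have hne : Δ.derivative ≠ 0 := fun h ↦ by simp [h] at hdeg'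
    simpa [hroots, eq_comm] using (mem_roots hne).2 hz
  · have hsign :
        Δ.eval (x j.castSucc.succ) * Δ.eval (x (⟨j + 1, hj⟩ : Fin n).castSucc.succ) < 0 :=
      halt j.succ
    nlinarith [mul_pos (hy_pos j) (hy_pos ⟨j + 1, hj⟩)]
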